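/- If Z is an invertible real n×n matrix with singular value decomposition Z = UΣVᵀ (U, V orthogonal, Σ diagonal with positive entries), then Ẑ = UVᵀ is orthogonal and satisfies ‖Z − Ẑ‖_F ≤ ‖Z − Q‖_F for every orthogonal n×n matrix Q. -/

import Mathlib

/-!
Since `‖Z - Q‖² = ‖Z‖² + n - 2 tr(QᵀZ)` for orthogonal `Q`, the nearest orthogonal matrix
maximises `tr(QᵀZ)`. For `Z = UΣVᵀ` this trace is `tr(WΣ)` with `W = VᵀQᵀU` orthogonal; the
diagonal entries of an orthogonal matrix are at most `1` and `Σ ≥ 0`, so `tr(QᵀZ) ≤ ∑ σᵢ`,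
with equality at `Q = UVᵀ`, where `W = 1`.
-/

open Matrix

/-- Frobenius norm of a square real matrix. -/
noncomputable def frobNorm {n : ℕ} (M : Matrix (Fin n) (Fin n) ℝ) : ℝ :=
  Real.sqrt (∑ i, ∑ j, (M i j) ^ 2)

lemma frobNorm_eq_sqrt_trace {n : ℕ} (M : Matrix (Fin n) (Fin n) ℝ) :
    frobNorm M = √(Mᵀ * M).trace := by
  rw [frobNorm, Finset.sum_comm]
  simp [trace, mul_apply, sq]

section

variable {n : Type*} [Fintype n] [DecidableEq n]

lemma mem_unitaryGroup_iff_transpose_mul_self {A : Matrix n n ℝ} :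
    A ∈ unitaryGroup n ℝ ↔ Aᵀ * A = 1 := by
  rw [mem_unitaryGroup_iff', star_eq_conjTranspose, conjTranspose_eq_transpose_of_trivial]

lemma diag_le_one_of_mem_unitaryGroup {W : Matrix n n ℝ} (hW : W ∈ unitaryGroup n ℝ) (i : n) :
    W i i ≤ 1 :=
  (le_abs_self _).trans (entry_norm_bound_of_unitary hW i i)

lemma trace_mul_diagonal_le_sum {W : Matrix n n ℝ} (hW : W ∈ unitaryGroup n ℝ) {σ : n → ℝ}
    (hσ : 0 ≤ σ) : (W * diagonal σ).trace ≤ ∑ i, σ i := by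
  simp only [trace, diag, mul_diagonal]
  exact Finset.sum_le_sum fun i _ =>
    mul_le_of_le_one_left (hσ i) (diag_le_one_of_mem_unitaryGroup hW i)

lemma trace_transpose_mul_sub_self_mul_sub (Z : Matrix n n ℝ) {Q : Matrix n n ℝ}
    (hQ : Qᵀ * Q = 1) :
    ((Z - Q)ᵀ * (Z - Q)).trace = (Zᵀ * Z).trace + Fintype.card n - 2 * (Qᵀ * Z).trace := by
  have hZQ : (Zᵀ * Q).trace = (Qᵀ * Z).trace := by
    rw [← trace_transpose, transpose_mul, transpose_transpose]
  rw [transpose_sub, sub_mul, mul_sub, mul_sub, hQ]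
  simp only [trace_sub, trace_one, hZQ]
  ring

lemma trace_transpose_mul_svd_le {U V Q : Matrix n n ℝ} (hU : Uᵀ * U = 1) (hV : Vᵀ * V = 1)
    (hQ : Qᵀ * Q = 1) {σ : n → ℝ} (hσ : 0 ≤ σ) :
    (Qᵀ * (U * diagonal σ * Vᵀ)).trace ≤ ∑ i, σ i := by
  rw [← mem_unitaryGroup_iff_transpose_mul_self] at hU hV hQ
  have hW : star V * star Q * U ∈ unitaryGroup n ℝ :=
    mul_mem (mul_mem (Unitary.star_mem hV) (Unitary.star_mem hQ)) hU
  simp only [star_eq_conjTranspose, conjTranspose_eq_transpose_of_trivial] at hW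
  calc (Qᵀ * (U * diagonal σ * Vᵀ)).trace = (Vᵀ * Qᵀ * U * diagonal σ).trace := by
        rw [← Matrix.mul_assoc, ← Matrix.mul_assoc, trace_mul_comm]
        simp only [Matrix.mul_assoc]
    _ ≤ ∑ i, σ i := trace_mul_diagonal_le_sum hW hσ

lemma trace_transpose_mul_svd_self {U V : Matrix n n ℝ} (hU : Uᵀ * U = 1) (hV : Vᵀ * V = 1)
    (σ : n → ℝ) : ((U * Vᵀ)ᵀ * (U * diagonal σ * Vᵀ)).trace = ∑ i, σ i := by
  calc ((U * Vᵀ)ᵀ * (U * diagonal σ * Vᵀ)).trace = (V * (Uᵀ * U) * diagonal σ * Vᵀ).trace := by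
        simp only [transpose_mul, transpose_transpose, Matrix.mul_assoc]
    _ = ∑ i, σ i := by
        rw [hU, Matrix.mul_one, trace_mul_comm, ← Matrix.mul_assoc, hV, Matrix.one_mul,
          trace_diagonal]

end

lemma frobNorm_sub_le_of_trace_le {n : ℕ} {Z P Q : Matrix (Fin n) (Fin n) ℝ}
    (hP : Pᵀ * P = 1) (hQ : Qᵀ * Q = 1) (h : (Qᵀ * Z).trace ≤ (Pᵀ * Z).trace) :
    frobNorm (Z - P) ≤ frobNorm (Z - Q) := by
  rw [frobNorm_eq_sqrt_trace, frobNorm_eq_sqrt_trace, trace_transpose_mul_sub_self_mul_sub Z hP,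
    trace_transpose_mul_sub_self_mul_sub Z hQ]
  gcongr

theorem procrustes_svd_solution_general {n : ℕ} (U V : Matrix (Fin n) (Fin n) ℝ)
    (σ : Fin n → ℝ)
    (hU : Uᵀ * U = 1)
    (hV : Vᵀ * V = 1)
    (hσ : ∀ i, 0 < σ i) :
    ((U * Vᵀ)ᵀ * (U * Vᵀ) = 1) ∧
      ∀ Q : Matrix (Fin n) (Fin n) ℝ, Qᵀ * Q = 1 →
        frobNorm (U * Matrix.diagonal σ * Vᵀ - U * Vᵀ) ≤
          frobNorm (U * Matrix.diagonal σ * Vᵀ - Q) := by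
  have hUV : (U * Vᵀ)ᵀ * (U * Vᵀ) = 1 := by
    rw [← mem_unitaryGroup_iff_transpose_mul_self] at hU hV ⊢
    simpa [star_eq_conjTranspose] using mul_mem hU (Unitary.star_mem hV)
  refine ⟨hUV, fun Q hQ => frobNorm_sub_le_of_trace_le hUV hQ ?_⟩
  rw [trace_transpose_mul_svd_self hU hV]
  exact trace_transpose_mul_svd_le hU hV hQ fun i => (hσ i).le

/-- Orthogonal Procrustes: if `Z = UΣVᵀ` is an SVD of an invertible matrix
(`U`, `V` orthogonal, `Σ` diagonal with positive entries), then `UVᵀ` is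
orthogonal and is the Frobenius-nearest orthogonal matrix to `Z`. -/
theorem procrustes_svd_solution {n : ℕ} (U V : Matrix (Fin n) (Fin n) ℝ)
    (σ : Fin n → ℝ)
    (hU : Uᵀ * U = 1) (hU' : U * Uᵀ = 1)
    (hV : Vᵀ * V = 1) (hV' : V * Vᵀ = 1)
    (hσ : ∀ i, 0 < σ i) :
    ((U * Vᵀ)ᵀ * (U * Vᵀ) = 1) ∧
      ∀ Q : Matrix (Fin n) (Fin n) ℝ, Qᵀ * Q = 1 →
        frobNorm (U * Matrix.diagonal σ * Vᵀ - U * Vᵀ) ≤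
          frobNorm (U * Matrix.diagonal σ * Vᵀ - Q) :=
  procrustes_svd_solution_general U V σ hU hV hσ
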